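/- For an element β of the wreath product G_n viewed as a matrix, let J̄(β) = {i : β_{ii} = 1} and ε_{J̄(β)} = Π_{i∈J̄(β)} ε_i. Then the map β ↦ β·ε_{J̄(β)} is a bijection from G_n onto the set of matrices γ ∈ Ḡ_n of degree n (no diagonal entry equal to 1) such that for every i, the i-th row of γ is nonzero if and only if the i-th column of γ is nonzero. -/

import Mathlib

open MonoidAlgebra

/-- The group algebra `ℤ[G]`, used as an ambient ring in which `G ∪ {0}` embeds as
`{0} ∪ {single g 1 | g ∈ G}`. -/
abbrev GA (G : Type*) [Group G] := MonoidAlgebra ℤ G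

/-- `a` is an entry in `G ∪ {0}`. -/
def IsEnt {G : Type*} [Group G] (a : GA G) : Prop := a = 0 ∨ ∃ g : G, a = single g 1

/-- An `n × n` matrix with entries in `G ∪ {0}` such that every row and every column
contains at most one nonzero entry. -/
def IsRC {G : Type*} [Group G] {n : ℕ} (M : Matrix (Fin n) (Fin n) (GA G)) : Prop :=
  (∀ i, {j | M i j ≠ 0}.Subsingleton) ∧ (∀ j, {i | M i j ≠ 0}.Subsingleton) ∧
    ∀ i j, IsEnt (M i j)

theorem IsEnt.mul {G : Type*} [Group G] {a b : GA G} (ha : IsEnt a) (hb : IsEnt b) :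
    IsEnt (a * b) := by
  rcases ha with ha | ⟨g, rfl⟩
  · exact Or.inl (by simp [ha])
  rcases hb with hb | ⟨g', rfl⟩
  · exact Or.inl (by simp [hb])
  · exact Or.inr ⟨g * g', by simp [MonoidAlgebra.single_mul_single]⟩

theorem exists_of_mul_ne_zero {G : Type*} [Group G] {n : ℕ}
    {M N : Matrix (Fin n) (Fin n) (GA G)} {i j : Fin n} (h : (M * N) i j ≠ 0) :
    ∃ k, M i k ≠ 0 ∧ N k j ≠ 0 := by
  by_contra hc
  push_neg at hc
  apply h
  rw [Matrix.mul_apply]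
  refine Finset.sum_eq_zero fun k _ => ?_
  by_cases hk : M i k = 0
  · simp [hk]
  · simp [hc k hk]

/-- The semigroup `Ḡ_n` of `n × n` matrices over `G ∪ {0}` with at most one nonzero entry
in each row and each column, realized as a submonoid of the matrix ring over `ℤ[G]`. -/
def GBar (G : Type*) [Group G] (n : ℕ) : Submonoid (Matrix (Fin n) (Fin n) (GA G)) where
  carrier := {M | IsRC M}
  one_mem' := by
    have key : ∀ a b : Fin n, (1 : Matrix (Fin n) (Fin n) (GA G)) a b ≠ 0 → a = b := by
      intro a b h
      by_contra hab
      simp [Matrix.one_apply, hab] at h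
    refine ⟨fun i => ?_, fun j => ?_, fun i j => ?_⟩
    · intro a ha b hb
      exact (key i a ha).symm.trans (key i b hb)
    · intro a ha b hb
      exact (key a j ha).trans (key b j hb).symm
    · by_cases h : i = j
      · subst h
        exact Or.inr ⟨1, by simp [Matrix.one_apply, MonoidAlgebra.one_def]⟩
      · exact Or.inl (by simp [Matrix.one_apply, h])
  mul_mem' := by
    rintro M N ⟨hMr, hMc, hMe⟩ ⟨hNr, hNc, hNe⟩
    refine ⟨fun i => ?_, fun j => ?_, fun i j => ?_⟩
    · intro a ha b hb
      obtain ⟨k, hk1, hk2⟩ := exists_of_mul_ne_zero ha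
      obtain ⟨k', hk1', hk2'⟩ := exists_of_mul_ne_zero hb
      have : k = k' := hMr i hk1 hk1'
      subst this
      exact hNr k hk2 hk2'
    · intro a ha b hb
      obtain ⟨k, hk1, hk2⟩ := exists_of_mul_ne_zero ha
      obtain ⟨k', hk1', hk2'⟩ := exists_of_mul_ne_zero hb
      have : k = k' := hNc j hk2 hk2'
      subst this
      exact hMc k hk1 hk1'
    · by_cases h : (M * N) i j = 0
      · exact Or.inl h
      obtain ⟨k, hk1, hk2⟩ := exists_of_mul_ne_zero h
      have hsum : (M * N) i j = M i k * N k j := by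
        rw [Matrix.mul_apply]
        refine Finset.sum_eq_single k (fun b _ hb => ?_) (by simp)
        by_cases hbz : M i b = 0
        · simp [hbz]
        · exact absurd (hMr i hbz hk1) hb
      rw [hsum]
      exact (hMe i k).mul (hNe k j)

/-- The idempotent `ε_j ∈ Ḡ_n`: the diagonal matrix with `0` in position `(j,j)` and
`1` in the other diagonal positions. -/
noncomputable def epsEl (G : Type*) [Group G] {n : ℕ} (j : Fin n) : GBar G n :=
  ⟨Matrix.diagonal (fun i => if i = j then 0 else 1), by
    have key : ∀ a b : Fin n,
        Matrix.diagonal (fun i : Fin n => if i = j then (0 : GA G) else 1) a b ≠ 0 → a = b := by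
      intro a b h
      by_contra hab
      simp [Matrix.diagonal_apply_ne _ hab] at h
    refine ⟨fun i => ?_, fun k => ?_, fun i k => ?_⟩
    · intro a ha b hb
      exact (key i a ha).symm.trans (key i b hb)
    · intro a ha b hb
      exact (key a k ha).trans (key b k hb).symm
    · by_cases h : i = k
      · subst h
        by_cases hij : i = j
        · exact Or.inl (by simp [Matrix.diagonal_apply_eq, hij])
        · exact Or.inr ⟨1, by simp [Matrix.diagonal_apply_eq, hij, MonoidAlgebra.one_def]⟩
      · exact Or.inl (by simp [Matrix.diagonal_apply_ne _ h])⟩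

/-- The action of `S_n` on `G^n` by permuting coordinates. -/
def permHom (G : Type*) [Group G] (n : ℕ) : Equiv.Perm (Fin n) →* MulAut (Fin n → G) where
  toFun σ :=
    { toFun := fun g => g ∘ σ.symm
      invFun := fun g => g ∘ σ
      left_inv := fun g => by ext i; simp
      right_inv := fun g => by ext i; simp
      map_mul' := fun g h => rfl }
  map_one' := by ext g i; simp [Equiv.Perm.one_def]
  map_mul' := fun σ τ => by ext g i; simp [Equiv.Perm.mul_def]

/-- The wreath product `G_n = G^n ⋊ S_n`. -/
abbrev Wreath (G : Type*) [Group G] (n : ℕ) :=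
  SemidirectProduct (Fin n → G) (Equiv.Perm (Fin n)) (permHom G n)

/-- The monoid embedding of the wreath product `G_n` into the matrices over `G ∪ {0}`:
`(g,σ)` goes to the matrix whose `(i,j)` entry is `g_i` if `σ(j) = i` and `0` otherwise. -/
noncomputable def wreathHom (G : Type*) [Group G] (n : ℕ) :
    Wreath G n →* Matrix (Fin n) (Fin n) (GA G) where
  toFun x := Matrix.of fun i j => if x.right j = i then single (x.left i) 1 else 0
  map_one' := by
    apply Matrix.ext
    intro i j
    by_cases h : i = j <;>
      simp [Matrix.one_apply, h, MonoidAlgebra.one_def, eq_comm]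
  map_mul' := by
    rintro ⟨a, σ⟩ ⟨b, τ⟩
    apply Matrix.ext
    intro i j
    rw [Matrix.mul_apply, Finset.sum_eq_single (τ j)]
    · simp only [SemidirectProduct.mul_left, SemidirectProduct.mul_right, Matrix.of_apply]
      rw [Equiv.Perm.mul_apply]
      by_cases h : σ (τ j) = i
      · rw [if_pos h, if_pos h]
        simp only [if_true]
        rw [MonoidAlgebra.single_mul_single]
        congr 1
        have hs : σ.symm i = τ j := by rw [← h]; simp
        simp [permHom, Pi.mul_apply, hs]
      · rw [if_neg h, if_neg h, zero_mul]
    · intro b' _ hb'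
      simp only [Matrix.of_apply]
      exact mul_eq_zero_of_right _ (if_neg fun hc => hb' hc.symm)
    · simp

theorem wreathHom_mem_GBar (G : Type*) [Group G] (n : ℕ) (x : Wreath G n) :
    wreathHom G n x ∈ GBar G n := by
  have key : ∀ i j : Fin n, wreathHom G n x i j ≠ 0 → x.right j = i := by
    intro i j h
    by_contra hc
    simp [wreathHom, hc] at h
  refine ⟨fun i => ?_, fun j => ?_, fun i j => ?_⟩
  · intro a ha b hb
    exact x.right.injective ((key i a ha).trans (key i b hb).symm)
  · intro a ha b hb
    exact (key a j ha).symm.trans (key b j hb)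
  · by_cases h : x.right j = i
    · exact Or.inr ⟨x.left i, by simp [wreathHom, h]⟩
    · exact Or.inl (by simp [wreathHom, h])

/-- The wreath product `G_n` as the submonoid of `Ḡ_n` of matrices with exactly one
nonzero entry in each row and each column. -/
noncomputable def GFull (G : Type*) [Group G] (n : ℕ) :
    Submonoid (Matrix (Fin n) (Fin n) (GA G)) :=
  MonoidHom.mrange (wreathHom G n)

theorem GFull_le_GBar (G : Type*) [Group G] (n : ℕ) : GFull G n ≤ GBar G n := by
  rintro M ⟨x, rfl⟩
  exact wreathHom_mem_GBar G n x

/-- An element of the wreath product, viewed inside `Ḡ_n`. -/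
noncomputable def wEl {G : Type*} [Group G] {n : ℕ} (x : Wreath G n) : GBar G n :=
  ⟨wreathHom G n x, wreathHom_mem_GBar G n x⟩

open scoped Classical

/-- `ε_T = Π_{i ∈ T} ε_i ∈ Ḡ_n` (the factors pairwise commute; the product is taken in
increasing order of the indices). -/
noncomputable def epsProd (G : Type*) [Group G] {n : ℕ} (T : Finset (Fin n)) : GBar G n :=
  ((T.sort (· ≤ ·)).map fun i => epsEl G i).prod

/-- `J̄(β) = {i | β_{ii} = 1}`. -/
noncomputable def Jbar {G : Type*} [Group G] {n : ℕ} (β : GBar G n) : Finset (Fin n) :=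
  Finset.univ.filter fun i => (β : Matrix (Fin n) (Fin n) (GA G)) i i = 1


/-!
Let `β ∈ G_n` and `J = J̄(β)`. For `i ∈ J` the entry `β_{ii} = 1` is the only nonzero entry
of row `i` and of column `i`, so right multiplication by `ε_J`, which deletes the columns in `J`,
makes exactly the rows and columns with index in `J` vanish, while all other rows and columns keep
their nonzero entry. Hence the inverse map puts a `1` at `(i, i)` for every index `i` whose row
and column both vanish. On a matrix of degree `n` this recovers `J` as the set of such indices,
and when zero rows and zero columns have the same indices the result has no zero column, which
places a matrix of `Ḡ_n` in `G_n`.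
-/

namespace Matrix

variable {m α : Type*} [Zero α]

def IsNullIndex (M : Matrix m m α) (i : m) : Prop :=
  (∀ k, M i k = 0) ∧ ∀ k, M k i = 0

variable [One α]

noncomputable def fillNullDiag (M : Matrix m m α) : Matrix m m α :=
  of fun i j => if i = j ∧ M.IsNullIndex i then 1 else M i j

variable {M : Matrix m m α} {i j : m}

theorem fillNullDiag_apply_self (h : M.IsNullIndex i) : M.fillNullDiag i i = 1 := by
  simp [fillNullDiag, h]

theorem fillNullDiag_apply_of_not_isNullIndex_left (h : ¬M.IsNullIndex i) :
    M.fillNullDiag i j = M i j := by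
  simp [fillNullDiag, h]

theorem fillNullDiag_apply_of_not_isNullIndex_right (h : ¬M.IsNullIndex j) :
    M.fillNullDiag i j = M i j := by
  simp only [fillNullDiag, of_apply]
  exact if_neg fun hij : i = j ∧ M.IsNullIndex i => h (hij.1 ▸ hij.2)

theorem fillNullDiag_apply_of_ne (hij : i ≠ j) : M.fillNullDiag i j = M i j := by
  simp [fillNullDiag, hij]

end Matrix

open Matrix

section

variable {G : Type*} [Group G] {n : ℕ}

theorem IsEnt.one : IsEnt (1 : GA G) := Or.inr ⟨1, MonoidAlgebra.one_def⟩

theorem fillNullDiag_mem_GBar {M : Matrix (Fin n) (Fin n) (GA G)} (hM : M ∈ GBar G n) :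
    M.fillNullDiag ∈ GBar G n := by
  obtain ⟨hrow, hcol, hent⟩ := hM
  refine ⟨fun i => ?_, fun j => ?_, fun i j => ?_⟩
  · by_cases hi : M.IsNullIndex i
    · have key : ∀ j, M.fillNullDiag i j ≠ 0 → i = j := fun j hj => by
        by_contra hij
        exact hj (by rw [fillNullDiag_apply_of_ne hij, hi.1 j])
      exact fun a ha b hb => (key a ha).symm.trans (key b hb)
    · simpa only [fillNullDiag_apply_of_not_isNullIndex_left hi] using hrow i
  · by_cases hj : M.IsNullIndex j
    · have key : ∀ i, M.fillNullDiag i j ≠ 0 → i = j := fun i hi => by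
        by_contra hij
        exact hi (by rw [fillNullDiag_apply_of_ne hij, hj.2 i])
      exact fun a ha b hb => (key a ha).trans (key b hb).symm
    · simpa only [fillNullDiag_apply_of_not_isNullIndex_right hj] using hcol j
  · by_cases h : i = j ∧ M.IsNullIndex i
    · obtain ⟨rfl, hi⟩ := h
      rw [fillNullDiag_apply_self hi]
      exact IsEnt.one
    · simp only [fillNullDiag, Matrix.of_apply, if_neg h]
      exact hent i j

theorem list_prod_map_diagonal_ite (l : List (Fin n)) :
    (l.map fun i => diagonal fun k => if k = i then (0 : GA G) else 1).prod =
      diagonal fun k => if k ∈ l then 0 else 1 := by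
  induction l with
  | nil => simp
  | cons a l ih =>
    rw [List.map_cons, List.prod_cons, ih, diagonal_mul_diagonal]
    congr 1
    funext k
    by_cases hka : k = a <;> simp [hka]

theorem coe_epsProd (T : Finset (Fin n)) :
    (epsProd G T : Matrix (Fin n) (Fin n) (GA G)) = diagonal fun k => if k ∈ T then 0 else 1 := by
  rw [epsProd, SubmonoidClass.coe_list_prod, List.map_map]
  exact (list_prod_map_diagonal_ite _).trans (by simp)

theorem mul_epsProd_apply (β : GBar G n) (T : Finset (Fin n)) (i j : Fin n) :
    ((β * epsProd G T : GBar G n) : Matrix (Fin n) (Fin n) (GA G)) i j =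
      if j ∈ T then 0 else (β : Matrix (Fin n) (Fin n) (GA G)) i j := by
  rw [Submonoid.coe_mul, coe_epsProd, mul_diagonal]
  split_ifs <;> simp

theorem mem_Jbar {β : GBar G n} {i : Fin n} :
    i ∈ Jbar β ↔ (β : Matrix (Fin n) (Fin n) (GA G)) i i = 1 := by
  simp [Jbar]

section Jbar

variable {β : GBar G n} {i j : Fin n}

theorem eq_of_mem_Jbar_left (hi : i ∈ Jbar β)
    (h : (β : Matrix (Fin n) (Fin n) (GA G)) i j ≠ 0) : i = j :=
  β.2.1 i (show _ ≠ 0 by rw [mem_Jbar.1 hi]; exact one_ne_zero) h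

theorem eq_of_mem_Jbar_right (hj : j ∈ Jbar β)
    (h : (β : Matrix (Fin n) (Fin n) (GA G)) i j ≠ 0) : i = j :=
  β.2.2.1 j h (show _ ≠ 0 by rw [mem_Jbar.1 hj]; exact one_ne_zero)

end Jbar

theorem wreathHom_apply_ne_zero_iff (x : Wreath G n) (i j : Fin n) :
    wreathHom G n x i j ≠ 0 ↔ x.right j = i := by
  simp only [wreathHom, MonoidHom.coe_mk, OneHom.coe_mk, Matrix.of_apply]
  split_ifs with h <;> simp [h]

section GFull

variable {M : Matrix (Fin n) (Fin n) (GA G)}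

theorem exists_ne_zero_row_of_mem_GFull (hM : M ∈ GFull G n) (i : Fin n) :
    ∃ j, M i j ≠ 0 := by
  obtain ⟨x, rfl⟩ := hM
  exact ⟨x.right.symm i, (wreathHom_apply_ne_zero_iff x i _).2 (x.right.apply_symm_apply i)⟩

theorem exists_ne_zero_col_of_mem_GFull (hM : M ∈ GFull G n) (j : Fin n) :
    ∃ i, M i j ≠ 0 := by
  obtain ⟨x, rfl⟩ := hM
  exact ⟨x.right j, (wreathHom_apply_ne_zero_iff x _ j).2 rfl⟩

-- The rows `σ j` of the nonzero entries of the columns `j` are distinct, so `σ` is a permutation.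
theorem mem_GFull_of_exists_ne_zero_col (hM : M ∈ GBar G n) (hcol : ∀ j, ∃ i, M i j ≠ 0) :
    M ∈ GFull G n := by
  obtain ⟨hrow, hcol', hent⟩ := hM
  choose f hf using hcol
  have hf_inj : Function.Injective f := fun a b hab => hrow (f a) (hf a) (hab ▸ hf b)
  set σ := Equiv.ofBijective f (Finite.injective_iff_bijective.1 hf_inj)
  have hσ : ∀ i j, M i j ≠ 0 ↔ σ j = i := fun i j =>
    ⟨fun h => hcol' j (hf j) h, fun h => h ▸ hf j⟩
  choose g hg using fun i => (hent i (σ.symm i)).resolve_left ((hσ _ _).2 (σ.apply_symm_apply i))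
  refine ⟨⟨g, σ⟩, Matrix.ext fun i j => ?_⟩
  simp only [wreathHom, MonoidHom.coe_mk, OneHom.coe_mk, Matrix.of_apply]
  split_ifs with h
  · rw [← hg, ← h, σ.symm_apply_apply]
  · by_contra hne
    exact h ((hσ i j).1 (Ne.symm hne))

end GFull

section epsJbar

variable {β : GBar G n}

theorem mul_epsJbar_apply_self_ne_one (k : Fin n) :
    ((β * epsProd G (Jbar β) : GBar G n) : Matrix (Fin n) (Fin n) (GA G)) k k ≠ 1 := by
  rw [mul_epsProd_apply]
  split_ifs with hk
  · exact zero_ne_one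
  · exact fun h => hk (mem_Jbar.2 h)

theorem exists_mul_epsJbar_row_ne_zero_iff (hβ : ↑β ∈ GFull G n) (i : Fin n) :
    (∃ j, ((β * epsProd G (Jbar β) : GBar G n) : Matrix (Fin n) (Fin n) (GA G)) i j ≠ 0) ↔
      i ∉ Jbar β := by
  simp only [mul_epsProd_apply, ne_eq, ite_eq_left_iff, Classical.not_imp]
  constructor
  · rintro ⟨j, hj, hne⟩ hi
    exact hj (eq_of_mem_Jbar_left hi hne ▸ hi)
  · intro hi
    obtain ⟨j, hne⟩ := exists_ne_zero_row_of_mem_GFull hβ i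
    exact ⟨j, fun hj => hi (eq_of_mem_Jbar_right hj hne ▸ hj), hne⟩

theorem exists_mul_epsJbar_col_ne_zero_iff (hβ : ↑β ∈ GFull G n) (i : Fin n) :
    (∃ j, ((β * epsProd G (Jbar β) : GBar G n) : Matrix (Fin n) (Fin n) (GA G)) j i ≠ 0) ↔
      i ∉ Jbar β := by
  simp only [mul_epsProd_apply, ne_eq, ite_eq_left_iff, Classical.not_imp]
  constructor
  · rintro ⟨j, hi, -⟩
    exact hi
  · intro hi
    obtain ⟨j, hne⟩ := exists_ne_zero_col_of_mem_GFull hβ i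
    exact ⟨j, hi, hne⟩

theorem isNullIndex_mul_epsJbar_iff (hβ : ↑β ∈ GFull G n) (i : Fin n) :
    IsNullIndex ((β * epsProd G (Jbar β) : GBar G n) : Matrix (Fin n) (Fin n) (GA G)) i ↔
      i ∈ Jbar β := by
  have hrow := (exists_mul_epsJbar_row_ne_zero_iff hβ i).not_left
  have hcol := (exists_mul_epsJbar_col_ne_zero_iff hβ i).not_left
  push Not at hrow hcol
  rw [IsNullIndex, hrow, hcol, and_self]

theorem fillNullDiag_mul_epsJbar (hβ : ↑β ∈ GFull G n) :
    fillNullDiag ((β * epsProd G (Jbar β) : GBar G n) : Matrix (Fin n) (Fin n) (GA G)) = β := by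
  refine Matrix.ext fun i j => ?_
  by_cases hij : i = j ∧ i ∈ Jbar β
  · obtain ⟨rfl, hi⟩ := hij
    rw [fillNullDiag_apply_self ((isNullIndex_mul_epsJbar_iff hβ i).2 hi), mem_Jbar.1 hi]
  · rw [fillNullDiag, Matrix.of_apply, isNullIndex_mul_epsJbar_iff hβ, if_neg hij,
      mul_epsProd_apply]
    split_ifs with hj
    · by_contra hne
      obtain rfl := eq_of_mem_Jbar_right hj (Ne.symm hne)
      exact hij ⟨rfl, hj⟩
    · rfl

end epsJbar

noncomputable def GBar.fillNullDiag (γ : GBar G n) : GBar G n :=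
  ⟨Matrix.fillNullDiag (γ : Matrix (Fin n) (Fin n) (GA G)), fillNullDiag_mem_GBar γ.2⟩

section fillNullDiag

variable {γ : GBar G n}

@[simp]
theorem GBar.coe_fillNullDiag :
    (GBar.fillNullDiag γ : Matrix (Fin n) (Fin n) (GA G)) =
      Matrix.fillNullDiag (γ : Matrix (Fin n) (Fin n) (GA G)) := rfl

theorem mem_Jbar_fillNullDiag_iff (hdiag : ∀ k, (γ : Matrix (Fin n) (Fin n) (GA G)) k k ≠ 1)
    (i : Fin n) :
    i ∈ Jbar (GBar.fillNullDiag γ) ↔ IsNullIndex (γ : Matrix (Fin n) (Fin n) (GA G)) i := by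
  rw [mem_Jbar]
  refine ⟨fun h => ?_, fillNullDiag_apply_self⟩
  by_contra hi
  exact hdiag i ((fillNullDiag_apply_of_not_isNullIndex_left hi).symm.trans h)

theorem fillNullDiag_mul_epsJbar_fillNullDiag
    (hdiag : ∀ k, (γ : Matrix (Fin n) (Fin n) (GA G)) k k ≠ 1) :
    GBar.fillNullDiag γ * epsProd G (Jbar (GBar.fillNullDiag γ)) = γ := by
  refine Subtype.ext (Matrix.ext fun i j => ?_)
  simp only [mul_epsProd_apply, mem_Jbar_fillNullDiag_iff hdiag, GBar.coe_fillNullDiag]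
  split_ifs with hj
  · exact (hj.2 i).symm
  · exact fillNullDiag_apply_of_not_isNullIndex_right hj

theorem fillNullDiag_mem_GFull
    (hrc : ∀ i, (∃ j, (γ : Matrix (Fin n) (Fin n) (GA G)) i j ≠ 0) ↔
      ∃ j, (γ : Matrix (Fin n) (Fin n) (GA G)) j i ≠ 0) :
    (GBar.fillNullDiag γ : Matrix (Fin n) (Fin n) (GA G)) ∈ GFull G n := by
  refine mem_GFull_of_exists_ne_zero_col (GBar.fillNullDiag γ).2 fun j => ?_
  by_cases hj : IsNullIndex (γ : Matrix (Fin n) (Fin n) (GA G)) j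
  · exact ⟨j, by rw [GBar.coe_fillNullDiag, fillNullDiag_apply_self hj]; exact one_ne_zero⟩
  · have hcol : ∃ i, (γ : Matrix (Fin n) (Fin n) (GA G)) i j ≠ 0 := by
      by_contra hcol
      have hrow := (hrc j).not.2 hcol
      push Not at hrow hcol
      exact hj ⟨hrow, hcol⟩
    obtain ⟨i, hi⟩ := hcol
    exact ⟨i, by rwa [GBar.coe_fillNullDiag, fillNullDiag_apply_of_not_isNullIndex_right hj]⟩

end fillNullDiag

end

/-- The map `β ↦ β · ε_{J̄(β)}` is a bijection from the wreath product `G_n ⊆ Ḡ_n`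
(matrices with exactly one nonzero entry in each row and column) onto the set of matrices
`γ ∈ Ḡ_n` of degree `n` (no diagonal entry equal to `1`) such that for every `i` the
`i`-th row of `γ` is nonzero if and only if the `i`-th column of `γ` is nonzero. -/
theorem bijOn_mul_epsJbar (G : Type*) [Group G] (n : ℕ) :
    Set.BijOn (fun β : GBar G n => β * epsProd G (Jbar β))
      {β : GBar G n | (β : Matrix (Fin n) (Fin n) (GA G)) ∈ GFull G n}
      {γ : GBar G n | (∀ k, (γ : Matrix (Fin n) (Fin n) (GA G)) k k ≠ 1) ∧
        ∀ i, (∃ j, (γ : Matrix (Fin n) (Fin n) (GA G)) i j ≠ 0) ↔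
          (∃ j, (γ : Matrix (Fin n) (Fin n) (GA G)) j i ≠ 0)} := by
  refine Set.InvOn.bijOn (f' := GBar.fillNullDiag) ⟨fun β hβ => ?_, fun γ hγ => ?_⟩
    (fun β hβ => ⟨mul_epsJbar_apply_self_ne_one, fun i => ?_⟩)
    (fun γ hγ => fillNullDiag_mem_GFull hγ.2)
  · exact Subtype.ext (fillNullDiag_mul_epsJbar hβ)
  · exact fillNullDiag_mul_epsJbar_fillNullDiag hγ.1
  · rw [exists_mul_epsJbar_row_ne_zero_iff hβ, exists_mul_epsJbar_col_ne_zero_iff hβ]
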